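/- arXiv:math/0501332 — 8 statements merged into one kernel-verified Lean document; each statement's English description precedes it below -/
import Mathlib

section
/- For the root system B_n and a positive root ε_i + ε_j with 1 ≤ i < j ≤ n, the singular set S(ε_i + ε_j) = ⋃_{k=i+1}^{j-1}{ε_i − ε_k, ε_k + ε_j} ∪ ⋃_{k=j+1}^{n}{ε_i − ε_k, ε_j + ε_k} ∪ {ε_i, ε_j} ∪ ⋃_{k=j+1}^{n}{ε_i + ε_k, ε_j − ε_k} has cardinality 2(2n − (i + j)). -/
open Finset

/-- Roots of `B_n`: `Sum.inl (false, a, b)` is `ε_a − ε_b`, `Sum.inl (true, a, b)` is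
`ε_a + ε_b` (with `a < b`), and `Sum.inr a` is the short root `ε_a`. -/
abbrev BnRoot : Type := (Bool × ℕ × ℕ) ⊕ ℕ

/-- The formal vector `ε_a` as a function `ℕ → ℤ`. -/
def eps (a : ℕ) : ℕ → ℤ := fun t => if t = a then 1 else 0

/-- The weight of a `B_n` root as a formal vector. -/
def wtB : BnRoot → (ℕ → ℤ)
  | Sum.inl (false, a, b) => eps a - eps b
  | Sum.inl (true, a, b) => eps a + eps b
  | Sum.inr a => eps a

/-- `β` is a positive root of `B_n`. -/
def isPosB (n : ℕ) : BnRoot → Prop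
  | Sum.inl (_, a, b) => 1 ≤ a ∧ a < b ∧ b ≤ n
  | Sum.inr a => 1 ≤ a ∧ a ≤ n

lemma eps_inj {a b : ℕ} (h : eps a = eps b) : a = b := by
  by_contra hne
  have := congrFun h a
  simp [eps, hne] at this

lemma pair2 {a c i j : ℕ} (h : eps a + eps c = eps i + eps j) (hij : i ≠ j) :
    (a = i ∧ c = j) ∨ (a = j ∧ c = i) := by
  by_cases hai : a = i
  · subst hai
    exact Or.inl ⟨rfl, eps_inj (add_left_cancel h)⟩
  · by_cases haj : a = j
    · subst haj
      refine Or.inr ⟨rfl, eps_inj ?_⟩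
      show eps c = eps i
      linear_combination h
    · exfalso
      have ha := congrFun h a
      by_cases hac : a = c <;>
        simp [eps, hai, haj, hac] at ha <;>
        by_cases hci : c = i <;> by_cases hcj : c = j <;>
        simp [hci, hcj] at ha <;> omega

lemma three_mem {a c d i j b : ℕ} (h : eps a + eps c + eps d = eps i + eps j + eps b)
    (hba : ¬ b = a) : b = c ∨ b = d := by
  by_cases hbc : b = c
  · exact Or.inl hbc
  by_cases hbd : b = d
  · exact Or.inr hbd
  exfalso
  have hb := congrFun h b
  by_cases hbi : b = i <;> by_cases hbj : b = j <;>
    simp [eps, hba, hbc, hbd, hbi, hbj] at hb <;> omega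

lemma sum_eps (a N : ℕ) (h : a < N) : ∑ t ∈ Finset.range N, eps a t = 1 := by
  simp only [eps]
  rw [Finset.sum_ite_eq' (Finset.range N) a (fun _ => (1:ℤ))]
  simp [h]

lemma noFF {a b c d i j : ℕ} (h : (eps a - eps b) + (eps c - eps d) = eps i + eps j) : False := by
  set N := a+b+c+d+i+j+1 with hN
  have := congrArg (fun f : ℕ → ℤ => ∑ t ∈ Finset.range N, f t) h
  simp only [Finset.sum_add_distrib, Finset.sum_sub_distrib, Pi.add_apply, Pi.sub_apply] at this
  rw [sum_eps a N (by omega), sum_eps b N (by omega), sum_eps c N (by omega),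
      sum_eps d N (by omega), sum_eps i N (by omega), sum_eps j N (by omega)] at this
  omega

lemma noFR {a b c i j : ℕ} (h : (eps a - eps b) + eps c = eps i + eps j) : False := by
  set N := a+b+c+i+j+1 with hN
  have := congrArg (fun f : ℕ → ℤ => ∑ t ∈ Finset.range N, f t) h
  simp only [Finset.sum_add_distrib, Finset.sum_sub_distrib, Pi.add_apply, Pi.sub_apply] at this
  rw [sum_eps a N (by omega), sum_eps b N (by omega), sum_eps c N (by omega),
      sum_eps i N (by omega), sum_eps j N (by omega)] at this
  omega

lemma noTT {a b c d i j : ℕ} (h : (eps a + eps b) + (eps c + eps d) = eps i + eps j) : False := by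
  set N := a+b+c+d+i+j+1 with hN
  have := congrArg (fun f : ℕ → ℤ => ∑ t ∈ Finset.range N, f t) h
  simp only [Finset.sum_add_distrib, Pi.add_apply] at this
  rw [sum_eps a N (by omega), sum_eps b N (by omega), sum_eps c N (by omega),
      sum_eps d N (by omega), sum_eps i N (by omega), sum_eps j N (by omega)] at this
  omega

lemma noTR {a b c i j : ℕ} (h : (eps a + eps b) + eps c = eps i + eps j) : False := by
  set N := a+b+c+i+j+1 with hN
  have := congrArg (fun f : ℕ → ℤ => ∑ t ∈ Finset.range N, f t) h
  simp only [Finset.sum_add_distrib, Pi.add_apply] at this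
  rw [sum_eps a N (by omega), sum_eps b N (by omega), sum_eps c N (by omega),
      sum_eps i N (by omega), sum_eps j N (by omega)] at this
  omega

lemma noRF {a c d i j : ℕ} (h : eps a + (eps c - eps d) = eps i + eps j) : False := by
  have h' : (eps c - eps d) + eps a = eps i + eps j := by linear_combination h
  exact noFR h'

lemma noRT {a c d i j : ℕ} (h : eps a + (eps c + eps d) = eps i + eps j) : False := by
  have h' : (eps c + eps d) + eps a = eps i + eps j := by linear_combination h
  exact noTR h'

/-- For a positive root `ε_i + ε_j` of `B_n` (`1 ≤ i < j ≤ n`), the singular set — the set of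
positive roots occurring in a pair of positive roots summing to `ε_i + ε_j` — equals
`⋃_{i<k<j}{ε_i−ε_k, ε_k+ε_j} ∪ ⋃_{j<k≤n}{ε_i−ε_k, ε_j+ε_k} ∪ {ε_i, ε_j}
  ∪ ⋃_{j<k≤n}{ε_i+ε_k, ε_j−ε_k}`, and it has cardinality `2(2n − (i + j))`. -/
theorem stmt2 (n i j : ℕ) (h1 : 1 ≤ i) (hij : i < j) (hjn : j ≤ n) :
    ∀ S : Finset BnRoot,
      S = (Ioo i j).image (fun k => (Sum.inl (false, i, k) : BnRoot)) ∪
          (Ioo i j).image (fun k => (Sum.inl (true, k, j) : BnRoot)) ∪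
          (Ioc j n).image (fun k => (Sum.inl (false, i, k) : BnRoot)) ∪
          (Ioc j n).image (fun k => (Sum.inl (true, j, k) : BnRoot)) ∪
          {(Sum.inr i : BnRoot), (Sum.inr j : BnRoot)} ∪
          (Ioc j n).image (fun k => (Sum.inl (true, i, k) : BnRoot)) ∪
          (Ioc j n).image (fun k => (Sum.inl (false, j, k) : BnRoot)) →
      (∀ β : BnRoot,
        β ∈ S ↔ isPosB n β ∧ ∃ γ : BnRoot, isPosB n γ ∧ wtB β + wtB γ = eps i + eps j) ∧
      S.card = 2 * (2 * n - (i + j)) := by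
  intro S hS
  subst hS
  constructor
  · intro β
    constructor
    · intro hmem
      simp only [Finset.mem_union, Finset.mem_image, Finset.mem_insert, Finset.mem_singleton,
        Finset.mem_Ioo, Finset.mem_Ioc] at hmem
      rcases hmem with ((((((⟨k, hk, rfl⟩ | ⟨k, hk, rfl⟩) | ⟨k, hk, rfl⟩) | ⟨k, hk, rfl⟩) |
        (rfl | rfl)) | ⟨k, hk, rfl⟩) | ⟨k, hk, rfl⟩)
      · refine ⟨⟨by omega, by omega, by omega⟩, Sum.inl (true, k, j),
          ⟨by omega, by omega, by omega⟩, ?_⟩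
        show eps i - eps k + (eps k + eps j) = eps i + eps j
        ring
      · refine ⟨⟨by omega, by omega, by omega⟩, Sum.inl (false, i, k),
          ⟨by omega, by omega, by omega⟩, ?_⟩
        show eps k + eps j + (eps i - eps k) = eps i + eps j
        ring
      · refine ⟨⟨by omega, by omega, by omega⟩, Sum.inl (true, j, k),
          ⟨by omega, by omega, by omega⟩, ?_⟩
        show eps i - eps k + (eps j + eps k) = eps i + eps j
        ring
      · refine ⟨⟨by omega, by omega, by omega⟩, Sum.inl (false, i, k),
          ⟨by omega, by omega, by omega⟩, ?_⟩
        show eps j + eps k + (eps i - eps k) = eps i + eps j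
        ring
      · exact ⟨⟨by omega, by omega⟩, Sum.inr j, ⟨by omega, by omega⟩, rfl⟩
      · refine ⟨⟨by omega, by omega⟩, Sum.inr i, ⟨by omega, by omega⟩, ?_⟩
        show eps j + eps i = eps i + eps j
        ring
      · refine ⟨⟨by omega, by omega, by omega⟩, Sum.inl (false, j, k),
          ⟨by omega, by omega, by omega⟩, ?_⟩
        show eps i + eps k + (eps j - eps k) = eps i + eps j
        ring
      · refine ⟨⟨by omega, by omega, by omega⟩, Sum.inl (true, i, k),
          ⟨by omega, by omega, by omega⟩, ?_⟩
        show eps j - eps k + (eps i + eps k) = eps i + eps j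
        ring
    · rintro ⟨hβ, γ, hγ, hE⟩
      simp only [Finset.mem_union, Finset.mem_image, Finset.mem_insert, Finset.mem_singleton,
        Finset.mem_Ioo, Finset.mem_Ioc]
      rcases β with ⟨bb, a, b⟩ | a <;> rcases γ with ⟨gb, c, d⟩ | c
      · obtain ⟨ha1, hab, hbn⟩ := hβ
        obtain ⟨hc1, hcd, hdn⟩ := hγ
        cases bb <;> cases gb <;> simp only [wtB] at hE
        · exact absurd hE (fun h => noFF h)
        · -- β = ε_a - ε_b, γ = ε_c + ε_d
          have E' : eps a + eps c + eps d = eps i + eps j + eps b := by linear_combination hE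
          rcases three_mem E' (by omega) with hbc | hbd
          · subst hbc
            have E'' : eps a + eps d = eps i + eps j := by linear_combination E'
            rcases pair2 E'' (by omega) with ⟨hai, hdj⟩ | ⟨haj, hdi⟩
            · exact Or.inl (Or.inl (Or.inl (Or.inl (Or.inl (Or.inl
                ⟨b, ⟨by omega, by omega⟩, by rw [hai]⟩)))))
            · exact absurd hdi (by omega)
          · subst hbd
            have E'' : eps a + eps c = eps i + eps j := by linear_combination E'
            rcases pair2 E'' (by omega) with ⟨hai, hcj⟩ | ⟨haj, hci⟩
            · exact Or.inl (Or.inl (Or.inl (Or.inl (Or.inr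
                ⟨b, ⟨by omega, by omega⟩, by rw [hai]⟩))))
            · exact Or.inr ⟨b, ⟨by omega, by omega⟩, by rw [haj]⟩
        · -- β = ε_a + ε_b, γ = ε_c - ε_d
          have E' : eps c + eps a + eps b = eps i + eps j + eps d := by linear_combination hE
          rcases three_mem E' (by omega) with hda | hdb
          · subst hda
            have E'' : eps b + eps c = eps i + eps j := by linear_combination hE
            rcases pair2 E'' (by omega) with ⟨hbi, hcj⟩ | ⟨hbj, hci⟩
            · exact absurd hbi (by omega)
            · exact Or.inl (Or.inl (Or.inl (Or.inl (Or.inl (Or.inr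
                ⟨d, ⟨by omega, by omega⟩, by rw [hbj]⟩)))))
          · subst hdb
            have E'' : eps a + eps c = eps i + eps j := by linear_combination hE
            rcases pair2 E'' (by omega) with ⟨hai, hcj⟩ | ⟨haj, hci⟩
            · exact Or.inl (Or.inr ⟨d, ⟨by omega, by omega⟩, by rw [hai]⟩)
            · exact Or.inl (Or.inl (Or.inl (Or.inr ⟨d, ⟨by omega, by omega⟩, by rw [haj]⟩)))
        · exact absurd hE (fun h => noTT h)
      · obtain ⟨ha1, hab, hbn⟩ := hβ
        cases bb <;> simp only [wtB] at hE
        · exact absurd hE (fun h => noFR h)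
        · exact absurd hE (fun h => noTR h)
      · cases gb <;> simp only [wtB] at hE
        · exact absurd hE (fun h => noRF h)
        · exact absurd hE (fun h => noRT h)
      · simp only [wtB] at hE
        rcases pair2 hE (by omega) with ⟨hai, hcj⟩ | ⟨haj, hci⟩
        · exact Or.inl (Or.inl (Or.inr (Or.inl (by rw [hai]))))
        · exact Or.inl (Or.inl (Or.inr (Or.inr (by rw [haj]))))
  · -- cardinality
    set A := (Ioo i j).image (fun k => (Sum.inl (false, i, k) : BnRoot)) with hA
    set B := (Ioo i j).image (fun k => (Sum.inl (true, k, j) : BnRoot)) with hB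
    set C := (Ioc j n).image (fun k => (Sum.inl (false, i, k) : BnRoot)) with hC
    set D := (Ioc j n).image (fun k => (Sum.inl (true, j, k) : BnRoot)) with hD
    set Ep := ({Sum.inr i, Sum.inr j} : Finset BnRoot) with hEp
    set F := (Ioc j n).image (fun k => (Sum.inl (true, i, k) : BnRoot)) with hF
    set G := (Ioc j n).image (fun k => (Sum.inl (false, j, k) : BnRoot)) with hG
    have hd1 : Disjoint A B := by
      rw [Finset.disjoint_left]
      intro x hx hy
      simp only [hA, hB, hC, hD, hEp, hF, hG, Finset.mem_union, Finset.mem_image,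
        Finset.mem_insert, Finset.mem_singleton, Finset.mem_Ioo, Finset.mem_Ioc] at hx hy
      rcases hx with ⟨k, hk, rfl⟩ <;> simp at hy <;> omega
    have hd2 : Disjoint (A ∪ B) C := by
      rw [Finset.disjoint_left]
      intro x hx hy
      simp only [hA, hB, hC, hD, hEp, hF, hG, Finset.mem_union, Finset.mem_image,
        Finset.mem_insert, Finset.mem_singleton, Finset.mem_Ioo, Finset.mem_Ioc] at hx hy
      rcases hx with (⟨k, hk, rfl⟩ | ⟨k, hk, rfl⟩) <;> simp at hy <;> omega
    have hd3 : Disjoint (A ∪ B ∪ C) D := by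
      rw [Finset.disjoint_left]
      intro x hx hy
      simp only [hA, hB, hC, hD, hEp, hF, hG, Finset.mem_union, Finset.mem_image,
        Finset.mem_insert, Finset.mem_singleton, Finset.mem_Ioo, Finset.mem_Ioc] at hx hy
      rcases hx with ((⟨k, hk, rfl⟩ | ⟨k, hk, rfl⟩) | ⟨k, hk, rfl⟩) <;> simp at hy <;> omega
    have hd4 : Disjoint (A ∪ B ∪ C ∪ D) Ep := by
      rw [Finset.disjoint_left]
      intro x hx hy
      simp only [hA, hB, hC, hD, hEp, hF, hG, Finset.mem_union, Finset.mem_image,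
        Finset.mem_insert, Finset.mem_singleton, Finset.mem_Ioo, Finset.mem_Ioc] at hx hy
      rcases hx with (((⟨k, hk, rfl⟩ | ⟨k, hk, rfl⟩) | ⟨k, hk, rfl⟩) | ⟨k, hk, rfl⟩) <;>
        simp at hy <;> omega
    have hd5 : Disjoint (A ∪ B ∪ C ∪ D ∪ Ep) F := by
      rw [Finset.disjoint_left]
      intro x hx hy
      simp only [hA, hB, hC, hD, hEp, hF, hG, Finset.mem_union, Finset.mem_image,
        Finset.mem_insert, Finset.mem_singleton, Finset.mem_Ioo, Finset.mem_Ioc] at hx hy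
      rcases hx with ((((⟨k, hk, rfl⟩ | ⟨k, hk, rfl⟩) | ⟨k, hk, rfl⟩) | ⟨k, hk, rfl⟩) |
        (rfl | rfl)) <;> simp at hy <;> omega
    have hd6 : Disjoint (A ∪ B ∪ C ∪ D ∪ Ep ∪ F) G := by
      rw [Finset.disjoint_left]
      intro x hx hy
      simp only [hA, hB, hC, hD, hEp, hF, hG, Finset.mem_union, Finset.mem_image,
        Finset.mem_insert, Finset.mem_singleton, Finset.mem_Ioo, Finset.mem_Ioc] at hx hy
      rcases hx with (((((⟨k, hk, rfl⟩ | ⟨k, hk, rfl⟩) | ⟨k, hk, rfl⟩) | ⟨k, hk, rfl⟩) |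
        (rfl | rfl)) | ⟨k, hk, rfl⟩) <;> simp at hy <;> omega
    have inj_fik : Function.Injective (fun k => (Sum.inl (false, i, k) : BnRoot)) :=
      fun x y h => by simpa using h
    have inj_tkj : Function.Injective (fun k => (Sum.inl (true, k, j) : BnRoot)) :=
      fun x y h => by simpa using h
    have inj_tjk : Function.Injective (fun k => (Sum.inl (true, j, k) : BnRoot)) :=
      fun x y h => by simpa using h
    have inj_tik : Function.Injective (fun k => (Sum.inl (true, i, k) : BnRoot)) :=
      fun x y h => by simpa using h
    have inj_fjk : Function.Injective (fun k => (Sum.inl (false, j, k) : BnRoot)) :=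
      fun x y h => by simpa using h
    rw [Finset.card_union_of_disjoint hd6, Finset.card_union_of_disjoint hd5,
      Finset.card_union_of_disjoint hd4, Finset.card_union_of_disjoint hd3,
      Finset.card_union_of_disjoint hd2, Finset.card_union_of_disjoint hd1,
      hA, hB, hC, hD, hEp, hF, hG,
      Finset.card_image_of_injective _ inj_fik, Finset.card_image_of_injective _ inj_tkj,
      Finset.card_image_of_injective _ inj_fik, Finset.card_image_of_injective _ inj_tjk,
      Finset.card_image_of_injective _ inj_tik, Finset.card_image_of_injective _ inj_fjk,
      Finset.card_pair (by simp only [ne_eq, Sum.inr.injEq]; omega),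
      Nat.card_Ioo, Nat.card_Ioc]
    omega
end

section
/- For the root system D_n and a positive root ε_i + ε_j with 1 ≤ i < j ≤ n, the singular set S(ε_i + ε_j) = ⋃_{k=i+1}^{j-1}{ε_i − ε_k, ε_k + ε_j} ∪ ⋃_{k=j+1}^{n}{ε_i − ε_k, ε_j + ε_k} ∪ ⋃_{k=j+1}^{n}{ε_i + ε_k, ε_j − ε_k} has cardinality 2(2n − i − j − 1). -/
open Finset

/-- Roots of `D_n`: `(false, a, b)` is `ε_a − ε_b` and `(true, a, b)` is `ε_a + ε_b`
(with `a < b`). -/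
abbrev DnRoot : Type := Bool × ℕ × ℕ

/-- The weight of a `D_n` root as a formal vector. -/
def wtD : DnRoot → (ℕ → ℤ)
  | (false, a, b) => eps a - eps b
  | (true, a, b) => eps a + eps b

/-- `β` is a positive root of `D_n`. -/
def isPosD (n : ℕ) : DnRoot → Prop
  | (_, a, b) => 1 ≤ a ∧ a < b ∧ b ≤ n

lemma disj_img {f g : ℕ → DnRoot} {s t : Finset ℕ}
    (h : ∀ x ∈ s, ∀ y ∈ t, f x ≠ g y) : Disjoint (s.image f) (t.image g) := by
  rw [Finset.disjoint_left]
  rintro β hβ hβ'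
  simp only [mem_image] at hβ hβ'
  obtain ⟨k, hk, rfl⟩ := hβ
  obtain ⟨l, hl, he⟩ := hβ'
  exact h k hk l hl he.symm


/-- For a positive root `ε_i + ε_j` of `D_n` (`1 ≤ i < j ≤ n`), the singular set — the set of
positive roots occurring in a pair of positive roots summing to `ε_i + ε_j` — equals
`⋃_{i<k<j}{ε_i−ε_k, ε_k+ε_j} ∪ ⋃_{j<k≤n}{ε_i−ε_k, ε_j+ε_k} ∪ ⋃_{j<k≤n}{ε_i+ε_k, ε_j−ε_k}`,
and it has cardinality `2(2n − i − j − 1)`. -/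
theorem stmt3 (n i j : ℕ) (h1 : 1 ≤ i) (hij : i < j) (hjn : j ≤ n) :
    ∀ S : Finset DnRoot,
      S = (Ioo i j).image (fun k => ((false, i, k) : DnRoot)) ∪
          (Ioo i j).image (fun k => ((true, k, j) : DnRoot)) ∪
          (Ioc j n).image (fun k => ((false, i, k) : DnRoot)) ∪
          (Ioc j n).image (fun k => ((true, j, k) : DnRoot)) ∪
          (Ioc j n).image (fun k => ((true, i, k) : DnRoot)) ∪
          (Ioc j n).image (fun k => ((false, j, k) : DnRoot)) →
      (∀ β : DnRoot,
        β ∈ S ↔ isPosD n β ∧ ∃ γ : DnRoot, isPosD n γ ∧ wtD β + wtD γ = eps i + eps j) ∧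
      S.card = 2 * (2 * n - i - j - 1) := by
  intro S hS
  subst hS
  constructor
  · intro β
    constructor
    · intro hβ
      simp only [mem_union, mem_image, mem_Ioo, mem_Ioc] at hβ
      rcases hβ with ((((⟨k, ⟨hik, hkj⟩, rfl⟩ | ⟨k, ⟨hik, hkj⟩, rfl⟩) | ⟨k, ⟨hjk, hkn⟩, rfl⟩) |
        ⟨k, ⟨hjk, hkn⟩, rfl⟩) | ⟨k, ⟨hjk, hkn⟩, rfl⟩) | ⟨k, ⟨hjk, hkn⟩, rfl⟩
      · exact ⟨⟨h1, hik, by omega⟩, (true, k, j), ⟨by omega, hkj, hjn⟩,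
          by simp only [wtD]; abel⟩
      · exact ⟨⟨by omega, hkj, hjn⟩, (false, i, k), ⟨h1, hik, by omega⟩,
          by simp only [wtD]; abel⟩
      · exact ⟨⟨h1, by omega, hkn⟩, (true, j, k), ⟨by omega, hjk, hkn⟩,
          by simp only [wtD]; abel⟩
      · exact ⟨⟨by omega, hjk, hkn⟩, (false, i, k), ⟨h1, by omega, hkn⟩,
          by simp only [wtD]; abel⟩
      · exact ⟨⟨h1, by omega, hkn⟩, (false, j, k), ⟨by omega, hjk, hkn⟩,
          by simp only [wtD]; abel⟩
      · exact ⟨⟨by omega, hjk, hkn⟩, (true, i, k), ⟨h1, by omega, hkn⟩,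
          by simp only [wtD]; abel⟩
    · rintro ⟨hpos, ⟨t, c, d⟩, hγpos, hsum⟩
      obtain ⟨s, a, b⟩ := β
      obtain ⟨ha1, hab, hbn⟩ : 1 ≤ a ∧ a < b ∧ b ≤ n := hpos
      obtain ⟨hc1, hcd, hdn⟩ : 1 ≤ c ∧ c < d ∧ d ≤ n := hγpos
      simp only [mem_union, mem_image, mem_Ioo, mem_Ioc]
      have H : ∀ p, wtD (s, a, b) p + wtD (t, c, d) p = eps i p + eps j p := by
        intro p
        have := congrFun hsum p
        simpa only [Pi.add_apply] using this
      cases s <;> cases t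
      · -- (false, false): impossible
        exfalso
        have Hb := H b
        simp only [wtD, Pi.sub_apply, eps] at Hb
        have hb : b = c := by split_ifs at Hb <;> omega
        subst hb
        have Hd := H d
        simp only [wtD, Pi.sub_apply, eps] at Hd
        split_ifs at Hd <;> omega
      · -- (false, true)
        have Hb := H b
        simp only [wtD, Pi.sub_apply, Pi.add_apply, eps] at Hb
        have hb : b = c ∨ b = d := by split_ifs at Hb <;> omega
        rcases hb with rfl | rfl
        · -- b = c : ε_a + ε_d = ε_i + ε_j, a < b < d
          have Ha := H a
          have Hd := H d
          simp only [wtD, Pi.sub_apply, Pi.add_apply, eps] at Ha Hd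
          have h1' : a = i ∨ a = j := by split_ifs at Ha <;> omega
          have h2' : d = i ∨ d = j := by split_ifs at Hd <;> omega
          obtain ⟨rfl, rfl⟩ : a = i ∧ d = j := by omega
          exact Or.inl (Or.inl (Or.inl (Or.inl (Or.inl ⟨b, ⟨hab, hcd⟩, rfl⟩))))
        · -- b = d : ε_a + ε_c = ε_i + ε_j
          have Ha := H a
          have Hc := H c
          have Hi := H i
          simp only [wtD, Pi.sub_apply, Pi.add_apply, eps] at Ha Hc Hi
          have h1' : a = i ∨ a = j := by split_ifs at Ha <;> omega
          have h2' : c = i ∨ c = j := by split_ifs at Hc <;> omega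
          have h12 : (a = i ∧ c = j) ∨ (a = j ∧ c = i) := by
            rcases h1' with h1' | h1' <;> rcases h2' with h2' | h2' <;>
              first
                | (left; exact ⟨h1', h2'⟩)
                | (right; exact ⟨h1', h2'⟩)
                | (exfalso; split_ifs at Hi <;> omega)
          rcases h12 with ⟨rfl, rfl⟩ | ⟨rfl, rfl⟩
          · exact Or.inl (Or.inl (Or.inl (Or.inr ⟨b, ⟨hcd, hbn⟩, rfl⟩)))
          · exact Or.inr ⟨b, ⟨hab, hbn⟩, rfl⟩
      · -- (true, false)
        have Hd := H d
        simp only [wtD, Pi.sub_apply, Pi.add_apply, eps] at Hd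
        have hd : d = a ∨ d = b := by split_ifs at Hd <;> omega
        rcases hd with rfl | rfl
        · -- d = a : ε_b + ε_c = ε_i + ε_j, c < a < b
          have Hb := H b
          have Hc := H c
          have Hi := H i
          simp only [wtD, Pi.sub_apply, Pi.add_apply, eps] at Hb Hc Hi
          have h1' : b = i ∨ b = j := by split_ifs at Hb <;> omega
          have h2' : c = i ∨ c = j := by split_ifs at Hc <;> omega
          have h12 : b = j ∧ c = i := by
            rcases h1' with h1' | h1' <;> rcases h2' with h2' | h2' <;>
              first
                | (exact ⟨h1', h2'⟩)
                | omega
                | (exfalso; split_ifs at Hi <;> omega)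
          obtain ⟨rfl, rfl⟩ := h12
          exact Or.inl (Or.inl (Or.inl (Or.inl (Or.inr ⟨d, ⟨hcd, hab⟩, rfl⟩))))
        · -- d = b : ε_a + ε_c = ε_i + ε_j
          have Ha := H a
          have Hc := H c
          have Hi := H i
          simp only [wtD, Pi.sub_apply, Pi.add_apply, eps] at Ha Hc Hi
          have h1' : a = i ∨ a = j := by split_ifs at Ha <;> omega
          have h2' : c = i ∨ c = j := by split_ifs at Hc <;> omega
          have h12 : (a = i ∧ c = j) ∨ (a = j ∧ c = i) := by
            rcases h1' with h1' | h1' <;> rcases h2' with h2' | h2' <;>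
              first
                | (left; exact ⟨h1', h2'⟩)
                | (right; exact ⟨h1', h2'⟩)
                | (exfalso; split_ifs at Hi <;> omega)
          rcases h12 with ⟨rfl, rfl⟩ | ⟨rfl, rfl⟩
          · exact Or.inl (Or.inr ⟨d, ⟨hcd, hdn⟩, rfl⟩)
          · exact Or.inl (Or.inl (Or.inr ⟨d, ⟨hab, hdn⟩, rfl⟩))
      · -- (true, true): impossible
        exfalso
        have Ha := H a
        have Hb := H b
        have Hc := H c
        have Hd := H d
        have Hi := H i
        simp only [wtD, Pi.add_apply, eps] at Ha Hb Hc Hd Hi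
        have ha' : a = i ∨ a = j := by split_ifs at Ha <;> omega
        have hb' : b = i ∨ b = j := by split_ifs at Hb <;> omega
        have hc' : c = i ∨ c = j := by split_ifs at Hc <;> omega
        have hd' : d = i ∨ d = j := by split_ifs at Hd <;> omega
        obtain ⟨rfl, rfl, rfl, rfl⟩ : a = i ∧ b = j ∧ c = i ∧ d = j := by omega
        split_ifs at Hi <;> omega
  · have inj1 : Function.Injective (fun k => ((false, i, k) : DnRoot)) :=
      fun x y h => by simpa using h
    have inj2 : Function.Injective (fun k => ((true, k, j) : DnRoot)) :=
      fun x y h => by simpa using h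
    have inj3 : Function.Injective (fun k => ((true, j, k) : DnRoot)) :=
      fun x y h => by simpa using h
    have inj4 : Function.Injective (fun k => ((true, i, k) : DnRoot)) :=
      fun x y h => by simpa using h
    have inj5 : Function.Injective (fun k => ((false, j, k) : DnRoot)) :=
      fun x y h => by simpa using h
    rw [card_union_of_disjoint, card_union_of_disjoint, card_union_of_disjoint,
      card_union_of_disjoint, card_union_of_disjoint,
      card_image_of_injective _ inj1, card_image_of_injective _ inj2,
      card_image_of_injective _ inj1, card_image_of_injective _ inj3,
      card_image_of_injective _ inj4, card_image_of_injective _ inj5,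
      Nat.card_Ioo, Nat.card_Ioc]
    · omega
    all_goals try simp only [disjoint_union_left]
    all_goals repeat' apply And.intro
    all_goals (
      apply disj_img
      intro x hx y hy
      simp only [mem_Ioo, mem_Ioc] at hx hy
      intro h
      first
        | simpa using h
        | (simp only [Prod.mk.injEq] at h; omega)
        | (simp at h; omega))
end

section
/- Let g be the strictly upper triangular n × n matrices over ℂ and f ∈ g*. If dim g/g^f = 2 (equivalently the coadjoint orbit of f is two-dimensional), then the support Supp(f) = {(i,j) : f(E_{ij}) ≠ 0} is contained in {(i,j) : 1 ≤ j − i ≤ 2}. -/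
open Matrix

/-- `g`: the span of the matrix units `E_{rs}`, `r < s`, i.e. the strictly upper triangular
`n × n` complex matrices. -/
noncomputable def gUpper (n : ℕ) : Submodule ℂ (Matrix (Fin n) (Fin n) ℂ) :=
  Submodule.span ℂ
    {m | ∃ r s : Fin n, r < s ∧ m = Matrix.single r s (1 : ℂ)}

/-!
If `f(E_{rs}) = c ≠ 0` then, for every `r < b < s`, the form `B(x, y) = f([x, y])` pairs
`E_{rb}` with `E_{bs}` (`[E_{rb}, E_{bs}] = E_{rs}`), while all other brackets among these
`2(s - r - 1)` matrix units vanish. Hence the families `E_{rb}, E_{bs}` and `-c⁻¹ E_{bs}, c⁻¹ E_{rb}`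
are biorthogonal for `B`, so `x ↦ (B(x, E_{rb}), B(x, E_{bs}))_b` maps `g` onto `ℂ^{2(s-r-1)}` and
kills `g^f`. Thus `dim g/g^f ≥ 2(s - r - 1)`, which exceeds `2` once `s - r > 2`.
-/

open Module

section Radical

variable {K V : Type*} [Field K] [AddCommGroup V] [Module K V]

theorem finrank_add_finrank_le_of_le_ker {M : Type*} [AddCommGroup M] [Module K M]
    [FiniteDimensional K V] (ψ : V →ₗ[K] M) (hψ : Function.Surjective ψ)
    {U : Submodule K V} (hU : U ≤ LinearMap.ker ψ) :
    finrank K U + finrank K M ≤ finrank K V := by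
  have hrank := ψ.finrank_range_add_finrank_ker
  rw [LinearMap.range_eq_top.mpr hψ, finrank_top] at hrank
  have := Submodule.finrank_mono hU
  omega

theorem finrank_add_card_le_of_biorthogonal {ι : Type*} [Fintype ι] [DecidableEq ι]
    (B : V →ₗ[K] V →ₗ[K] K) (g W : Submodule K V) [FiniteDimensional K g]
    (hW : ∀ x ∈ W, x ∈ g ∧ ∀ y ∈ g, B x y = 0)
    (u v : ι → V) (hu : ∀ i, u i ∈ g) (hv : ∀ i, v i ∈ g)
    (huv : ∀ i j, B (u i) (v j) = if i = j then 1 else 0) :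
    finrank K W + Fintype.card ι ≤ finrank K g := by
  let ψ : g →ₗ[K] ι → K := LinearMap.pi fun j => (B.flip (v j)).comp g.subtype
  have hψ : Function.Surjective ψ := fun w => by
    refine ⟨⟨∑ i, w i • u i, g.sum_mem fun i _ => g.smul_mem _ (hu i)⟩, funext fun j => ?_⟩
    simp [ψ, huv]
  have hker : W.comap g.subtype ≤ LinearMap.ker ψ := fun x hx => by
    ext j
    exact (hW _ hx).2 _ (hv j)
  have hWg : W ≤ g := fun x hx => (hW x hx).1
  have := finrank_add_finrank_le_of_le_ker ψ hψ hker
  rwa [(Submodule.comapSubtypeEquivOfLe hWg).finrank_eq, finrank_fintype_fun_eq_card] at this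

end Radical

section CommutatorForm

variable {K A : Type*} [CommRing K] [Ring A] [Algebra K A]

def commutatorForm (f : A →ₗ[K] K) : A →ₗ[K] A →ₗ[K] K :=
  (LinearMap.mul K A - (LinearMap.mul K A).flip).compr₂ f

@[simp]
theorem commutatorForm_apply (f : A →ₗ[K] K) (x y : A) :
    commutatorForm f x y = f (x * y - y * x) := by
  simp [commutatorForm]

end CommutatorForm

theorem single_mem_gUpper {n : ℕ} {i j : Fin n} (h : i < j) : single i j (1 : ℂ) ∈ gUpper n :=
  Submodule.subset_span ⟨i, j, h, rfl⟩

theorem single_mul_single_one {α l m n : Type*} [Semiring α] [Fintype m] [DecidableEq l]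
    [DecidableEq m] [DecidableEq n] (i : l) (j k : m) (l' : n) :
    single i j (1 : α) * single k l' (1 : α) = if j = k then single i l' 1 else 0 := by
  split_ifs with h
  · rw [h, single_mul_single_same, one_mul]
  · exact single_mul_single_of_ne (c := 1) i j k h 1

theorem finrank_add_two_mul_le_of_apply_single_ne_zero {n : ℕ}
    (f : Matrix (Fin n) (Fin n) ℂ →ₗ[ℂ] ℂ) (W : Submodule ℂ (Matrix (Fin n) (Fin n) ℂ))
    (hW : ∀ x ∈ W, x ∈ gUpper n ∧ ∀ y ∈ gUpper n, f (x * y - y * x) = 0)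
    {r s : Fin n} (hf : f (single r s 1) ≠ 0) :
    finrank ℂ W + 2 * ((s : ℕ) - r - 1) ≤ finrank ℂ (gUpper n) := by
  set c := f (single r s 1) with hc
  let v : Finset.Ioo r s ⊕ Finset.Ioo r s → Matrix (Fin n) (Fin n) ℂ :=
    Sum.elim (fun b => single r b 1) (fun b => single b s 1)
  let u : Finset.Ioo r s ⊕ Finset.Ioo r s → Matrix (Fin n) (Fin n) ℂ :=
    Sum.elim (fun b => -c⁻¹ • single (b : Fin n) s 1) (fun b => c⁻¹ • single r (b : Fin n) 1)
  have huv : ∀ i j, commutatorForm f (u i) (v j) = if i = j then 1 else 0 := by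
    rintro (⟨b, hb⟩ | ⟨b, hb⟩) (⟨b', hb'⟩ | ⟨b', hb'⟩) <;>
      simp only [Finset.mem_Ioo] at hb hb' <;>
      simp [-smul_single, u, v, single_mul_single_one, hb.1.ne', hb.2.ne', hb'.1.ne',
        hb'.2.ne', (hb.1.trans hb.2).ne', apply_ite f, ← hc, hf, eq_comm (a := b')]
  have hu : ∀ i, u i ∈ gUpper n := by
    rintro (⟨b, hb⟩ | ⟨b, hb⟩) <;> rw [Finset.mem_Ioo] at hb
    · exact (gUpper n).smul_mem _ (single_mem_gUpper hb.2)
    · exact (gUpper n).smul_mem _ (single_mem_gUpper hb.1)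
  have hv : ∀ i, v i ∈ gUpper n := by
    rintro (⟨b, hb⟩ | ⟨b, hb⟩) <;> rw [Finset.mem_Ioo] at hb
    · exact single_mem_gUpper hb.1
    · exact single_mem_gUpper hb.2
  have := finrank_add_card_le_of_biorthogonal (commutatorForm f) (gUpper n) W
    (by simpa using hW) u v hu hv huv
  rwa [Fintype.card_sum, Fintype.card_coe, Fin.card_Ioo, ← two_mul] at this

/-- Let `g` be the strictly upper triangular matrices and `f ∈ g*`.  If
`dim g/g^f = 2` (the coadjoint orbit of `f` is two-dimensional), where
`g^f = {x ∈ g : f([x,y]) = 0 ∀ y ∈ g}`, then the support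
`Supp(f) = {(r,s) : r < s, f(E_{rs}) ≠ 0}` is contained in
`{(r,s) : 1 ≤ s − r ≤ 2}`. -/
theorem stmt8 (n : ℕ) (f : Matrix (Fin n) (Fin n) ℂ →ₗ[ℂ] ℂ)
    (W : Submodule ℂ (Matrix (Fin n) (Fin n) ℂ))
    (hW : (W : Set (Matrix (Fin n) (Fin n) ℂ)) =
      {x | x ∈ gUpper n ∧ ∀ y ∈ gUpper n, f (x * y - y * x) = 0})
    (hdim : Module.finrank ℂ (gUpper n) = Module.finrank ℂ W + 2) :
    ∀ r s : Fin n, r < s → f (Matrix.single r s (1 : ℂ)) ≠ 0 →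
      (s : ℕ) ≤ (r : ℕ) + 2 := by
  intro r s _ hf
  have hW' : ∀ x ∈ W, x ∈ gUpper n ∧ ∀ y ∈ gUpper n, f (x * y - y * x) = 0 := fun x hx =>
    (Set.ext_iff.mp hW x).mp hx
  have := finrank_add_two_mul_le_of_apply_single_ne_zero f W hW' hf
  omega
end

section
/- For Φ⁺(A_{n-1}) with n odd, the basic subset D = {ε_1 − ε_n, ε_2 − ε_{n-1}, …, ε_{(n-1)/2} − ε_{(n+3)/2}} satisfies s(D) = |⋃_{α∈D} S(α)| = ½(n−1)². -/
open Finset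

/-- The singular set `S(ε_i − ε_j) = {(i,k) : i<k<j} ∪ {(k,j) : i<k<j}` for `A_{n-1}`. -/
def SingA (i j : ℕ) : Finset (ℕ × ℕ) :=
  (Ioo i j).image (fun k => (i, k)) ∪ (Ioo i j).image (fun k => (k, j))

lemma myGaussSum (N : ℕ) : (∑ i ∈ Icc 1 N, (N - i)) * 2 = N * (N - 1) := by
  induction N with
  | zero => simp
  | succ N ih =>
    rw [Finset.sum_Icc_succ_top (by omega : 1 ≤ N + 1)]
    have h : ∑ i ∈ Icc 1 N, (N + 1 - i) = (∑ i ∈ Icc 1 N, (N - i)) + N := by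
      have : ∑ i ∈ Icc 1 N, (N + 1 - i) = ∑ i ∈ Icc 1 N, ((N - i) + 1) := by
        apply Finset.sum_congr rfl
        intro i hi
        simp only [mem_Icc] at hi
        omega
      rw [this, Finset.sum_add_distrib, Finset.sum_const, Nat.card_Icc]
      simp
    rw [h]
    simp only [Nat.add_sub_cancel]
    have h2 : (N + 1) * N = N * N + N := by ring
    rw [h2]
    have h3 : N * (N - 1) = N * N - N := by cases N with
      | zero => simp
      | succ k => simp only [Nat.succ_sub_one]; ring_nf; omega
    rw [h3] at ih
    have : N ≤ N * N := by nlinarith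
    omega

lemma key_union (m : ℕ) :
    ((Icc 1 m).biUnion fun r => SingA r (2 * m + 1 + 1 - r))
      = (Icc 1 (2 * m + 1)).biUnion
          (fun i => ((Icc (i + 1) (2 * m + 1)).erase (2 * m + 2 - i)).image (fun j => (i, j))) := by
  ext ⟨a, b⟩
  simp only [SingA, mem_biUnion, mem_union, mem_image, mem_Ioo, mem_Icc, mem_erase,
    Prod.mk.injEq]
  constructor
  · rintro ⟨r, ⟨hr1, hr2⟩, ⟨k, ⟨hk1, hk2⟩, hka, hkb⟩ | ⟨k, ⟨hk1, hk2⟩, hka, hkb⟩⟩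
    · exact ⟨a, by omega, ⟨b, ⟨by omega, by omega, by omega⟩, rfl, rfl⟩⟩
    · exact ⟨a, by omega, ⟨b, ⟨by omega, by omega, by omega⟩, rfl, rfl⟩⟩
  · rintro ⟨i, ⟨hi1, hi2⟩, ⟨j, ⟨hj0, hj1, hj2⟩, rfl, rfl⟩⟩
    rcases le_or_gt (i + j) (2 * m + 1) with h | h
    · exact ⟨i, ⟨by omega, by omega⟩, Or.inl ⟨j, ⟨by omega, by omega⟩, rfl, rfl⟩⟩
    · exact ⟨2 * m + 2 - j, ⟨by omega, by omega⟩, Or.inr ⟨i, ⟨by omega, by omega⟩, rfl, by omega⟩⟩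

lemma key_card (m : ℕ) :
    ((Icc 1 m).biUnion fun r => SingA r (2 * m + 1 + 1 - r)).card = 2 * m ^ 2 := by
  rw [key_union]
  rw [Finset.card_biUnion]
  · have hterm : ∀ i ∈ Icc 1 (2 * m + 1),
        (((Icc (i + 1) (2 * m + 1)).erase (2 * m + 2 - i)).image (fun j => (i, j))).card
          = (2 * m + 1 - i) - (if i ≤ m then 1 else 0) := by
      intro i hi
      simp only [mem_Icc] at hi
      rw [Finset.card_image_of_injective _ (fun x y h => by simpa using h)]
      by_cases hc : i ≤ m
      · rw [Finset.card_erase_of_mem (by simp only [mem_Icc]; omega), Nat.card_Icc]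
        simp only [if_pos hc]; omega
      · rw [Finset.erase_eq_of_notMem (by simp only [mem_Icc]; omega), Nat.card_Icc]
        simp only [if_neg hc]; omega
    rw [Finset.sum_congr rfl hterm]
    have hsplit : ∑ i ∈ Icc 1 (2 * m + 1), ((2 * m + 1 - i) - (if i ≤ m then 1 else 0))
          + ∑ i ∈ Icc 1 (2 * m + 1), (if i ≤ m then 1 else 0)
        = ∑ i ∈ Icc 1 (2 * m + 1), (2 * m + 1 - i) := by
      rw [← Finset.sum_add_distrib]
      apply Finset.sum_congr rfl
      intro i hi
      simp only [mem_Icc] at hi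
      by_cases hc : i ≤ m <;> · simp [hc]; try omega
    have hcount : ∑ i ∈ Icc 1 (2 * m + 1), (if i ≤ m then 1 else 0) = m := by
      rw [← Finset.card_filter]
      have : (Icc 1 (2 * m + 1)).filter (fun i => i ≤ m) = Icc 1 m := by
        ext i; simp only [mem_Icc, mem_filter]; omega
      rw [this, Nat.card_Icc]
      omega
    have hg := myGaussSum (2 * m + 1)
    have hT : ∑ i ∈ Icc 1 (2 * m + 1), (2 * m + 1 - i) = 2 * m ^ 2 + m := by
      have h2 : (2 * m + 1) * (2 * m + 1 - 1) = (2 * m ^ 2 + m) * 2 := by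
        simp only [Nat.add_sub_cancel]; ring
      rw [h2] at hg
      exact Nat.eq_of_mul_eq_mul_right (by norm_num) hg
    omega
  · intro x hx y hy hxy
    simp only [Finset.disjoint_left]
    rintro ⟨a, b⟩ ha hb
    simp only [mem_image, Prod.mk.injEq] at ha hb
    obtain ⟨_, _, h1, _⟩ := ha
    obtain ⟨_, _, h2, _⟩ := hb
    exact hxy (h1 ▸ h2 ▸ rfl)

/-- For `Φ⁺(A_{n-1})` with `n` odd, the basic subset
`D = {ε_1 − ε_n, ε_2 − ε_{n-1}, …, ε_{(n-1)/2} − ε_{(n+3)/2}} = {(r, n+1−r) : 1 ≤ r ≤ (n−1)/2}`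
satisfies `s(D) = |⋃_{α∈D} S(α)| = ½(n−1)²`. -/
theorem stmt11 (n : ℕ) (hn : Odd n) :
    ((Icc 1 ((n - 1) / 2)).biUnion fun r => SingA r (n + 1 - r)).card
      = (n - 1) ^ 2 / 2 := by
  obtain ⟨m, rfl⟩ := hn
  have h1 : (2 * m + 1 - 1) / 2 = m := by omega
  have h2 : (2 * m + 1 - 1) ^ 2 / 2 = 2 * m ^ 2 := by
    have : (2 * m + 1 - 1) ^ 2 = 2 * m ^ 2 * 2 := by
      simp only [Nat.add_sub_cancel]; ring
    rw [this, Nat.mul_div_cancel _ (by norm_num)]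
  rw [h1, h2]
  exact key_card m
end

section
/- For Φ⁺(A_{n-1}) with n even, the basic subset D = {ε_1 − ε_n, ε_2 − ε_{n-1}, …, ε_{n/2} − ε_{n/2+1}} satisfies s(D) = |⋃_{α∈D} S(α)| = ½(n−2)n. -/
open Finset

def TT (n : ℕ) : Finset (ℕ × ℕ) :=
  (Icc 1 n).biUnion (fun i => ((Ioc i n).erase (n + 1 - i)).image (Prod.mk i))

lemma mem_TT (n a b : ℕ) :
    (a, b) ∈ TT n ↔ 1 ≤ a ∧ a < b ∧ b ≤ n ∧ a + b ≠ n + 1 := by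
  simp only [TT, mem_biUnion, mem_image, mem_erase, mem_Ioc, mem_Icc, Prod.mk.injEq]
  constructor
  · rintro ⟨i, ⟨hi1, hi2⟩, j, ⟨hj1, ⟨hj2, hj3⟩⟩, rfl, rfl⟩
    omega
  · rintro ⟨h1, h2, h3, h4⟩
    exact ⟨a, ⟨h1, by omega⟩, b, ⟨by omega, h2, h3⟩, rfl, rfl⟩

lemma union_eq (n : ℕ) (hn : Even n) :
    ((Icc 1 (n / 2)).biUnion fun r => SingA r (n + 1 - r)) = TT n := by
  obtain ⟨m, rfl⟩ := hn
  ext ⟨a, b⟩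
  rw [mem_TT]
  simp only [mem_biUnion, mem_Icc, SingA, mem_union, mem_image, mem_Ioo, Prod.mk.injEq]
  constructor
  · rintro ⟨r, ⟨hr1, hr2⟩, ⟨k, ⟨hk1, hk2⟩, rfl, rfl⟩ | ⟨k, ⟨hk1, hk2⟩, rfl, rfl⟩⟩ <;> omega
  · rintro ⟨h1, h2, h3, h4⟩
    rcases le_or_gt (a + b) (m + m) with h | h
    · exact ⟨a, ⟨h1, by omega⟩, Or.inl ⟨b, ⟨h2, by omega⟩, rfl, rfl⟩⟩
    · exact ⟨m + m + 1 - b, ⟨by omega, by omega⟩, Or.inr ⟨a, ⟨by omega, by omega⟩, rfl, by omega⟩⟩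

lemma card_TT (n : ℕ) :
    (TT n).card = ∑ i ∈ Icc 1 n, ((n - i) - if 2 * i ≤ n then 1 else 0) := by
  rw [TT, card_biUnion]
  · refine Finset.sum_congr rfl fun i hi => ?_
    simp only [mem_Icc] at hi
    rw [card_image_of_injective _ (fun x y h => (Prod.mk.injEq _ _ _ _ ▸ h).2)]
    by_cases h : n + 1 - i ∈ Ioc i n
    · rw [card_erase_of_mem h, Nat.card_Ioc]
      simp only [mem_Ioc] at h
      have : 2 * i ≤ n := by omega
      simp [this]
    · rw [erase_eq_of_notMem h, Nat.card_Ioc]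
      simp only [mem_Ioc, not_and_or, not_le, not_lt] at h
      have : ¬ 2 * i ≤ n := by omega
      simp [this]
  · intro i hi j hj hij
    simp only [disjoint_left, mem_image]
    rintro ⟨a, b⟩ ⟨x, hx, h⟩ ⟨y, hy, h'⟩
    apply hij
    have h1 := (Prod.mk.injEq _ _ _ _).mp h
    have h2 := (Prod.mk.injEq _ _ _ _).mp h'
    omega

/-- For `Φ⁺(A_{n-1})` with `n` even, the basic subset
`D = {ε_1 − ε_n, ε_2 − ε_{n-1}, …, ε_{n/2} − ε_{n/2+1}} = {(r, n+1−r) : 1 ≤ r ≤ n/2}`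
satisfies `s(D) = |⋃_{α∈D} S(α)| = ½(n−2)n`. -/
theorem stmt12 (n : ℕ) (hn : Even n) :
    ((Icc 1 (n / 2)).biUnion fun r => SingA r (n + 1 - r)).card
      = (n - 2) * n / 2 := by
  rw [union_eq n hn, card_TT]
  obtain ⟨m, rfl⟩ := hn
  have hsub : ∀ i ∈ Icc 1 (m + m), (if 2 * i ≤ m + m then 1 else 0) ≤ m + m - i := by
    intro i hi
    simp only [mem_Icc] at hi
    split <;> omega
  rw [Finset.sum_tsub_distrib _ hsub]
  have h1 : ∑ i ∈ Icc 1 (m + m), (m + m - i) = ∑ i ∈ range (m + m), i := by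
    refine Finset.sum_nbij' (fun i => m + m - i) (fun i => m + m - i) ?_ ?_ ?_ ?_ ?_
    all_goals intro a ha
    all_goals simp only [mem_Icc, mem_range] at ha ⊢
    all_goals omega
  have h2 : ∑ i ∈ Icc 1 (m + m), (if 2 * i ≤ m + m then 1 else 0) = m := by
    rw [← Finset.sum_filter]
    have : (Icc 1 (m + m)).filter (fun i => 2 * i ≤ m + m) = Icc 1 m := by
      ext i
      simp only [mem_filter, mem_Icc]
      omega
    simp [this]
  rw [h1, h2, Finset.sum_range_id]
  rcases m with _ | k
  · simp
  · have e1 : (k + 1 + (k + 1)) * (k + 1 + (k + 1) - 1) = 2 * ((k + 1) * (2 * k + 1)) := by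
      have h : k + 1 + (k + 1) - 1 = 2 * k + 1 := by omega
      rw [h]; ring
    have e2 : (k + 1 + (k + 1) - 2) * (k + 1 + (k + 1)) = 2 * (k * (2 * k + 2)) := by
      have h : k + 1 + (k + 1) - 2 = 2 * k := by omega
      rw [h]; ring
    rw [e1, e2, Nat.mul_div_cancel_left _ two_pos, Nat.mul_div_cancel_left _ two_pos]
    have : (k + 1) * (2 * k + 1) = k * (2 * k + 2) + (k + 1) := by ring
    omega
end

section
/- For every basic subset D of Φ⁺(A_{n-1}), s(D) = |⋃_{α∈D} S(α)| ≤ ½(n−2)n if n is even, and s(D) ≤ ½(n−1)² if n is odd. -/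
open Finset

/-- The root `ε_i − ε_j` attached to the pair `(i,j)`. -/
def rootA (p : ℕ × ℕ) : ℕ → ℤ := eps p.1 - eps p.2

/-- `v` is a positive root of `A_{n-1}`. -/
def isPosRootA (n : ℕ) (v : ℕ → ℤ) : Prop :=
  ∃ p q : ℕ, 1 ≤ p ∧ p < q ∧ q ≤ n ∧ v = eps p - eps q

lemma mem_SingA_iff {i j : ℕ} {p : ℕ × ℕ} :
    p ∈ SingA i j ↔ (p.1 = i ∧ i < p.2 ∧ p.2 < j) ∨ (p.2 = j ∧ i < p.1 ∧ p.1 < j) := by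
  obtain ⟨x, y⟩ := p
  simp only [SingA, mem_union, mem_image, mem_Ioo, Prod.mk.injEq]
  constructor
  · rintro (⟨k, hk, rfl, rfl⟩ | ⟨k, hk, rfl, rfl⟩) <;> simp_all
  · rintro (⟨rfl, h2, h3⟩ | ⟨rfl, h2, h3⟩)
    · exact Or.inl ⟨y, ⟨h2, h3⟩, rfl, rfl⟩
    · exact Or.inr ⟨x, ⟨h2, h3⟩, rfl, rfl⟩

/-- For every basic subset `D` of `Φ⁺(A_{n-1})` (i.e. the difference of no two elements of `D`
is a positive root), `s(D) = |⋃_{α∈D} S(α)| ≤ ½(n−2)n` if `n` is even and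
`s(D) ≤ ½(n−1)²` if `n` is odd. -/
theorem stmt13 (n : ℕ) (D : Finset (ℕ × ℕ))
    (hD : ∀ p ∈ D, 1 ≤ p.1 ∧ p.1 < p.2 ∧ p.2 ≤ n)
    (hbasic : ∀ p ∈ D, ∀ q ∈ D, ¬ isPosRootA n (rootA p - rootA q)) :
    (Even n → (D.biUnion fun p => SingA p.1 p.2).card ≤ (n - 2) * n / 2) ∧
    (Odd n → (D.biUnion fun p => SingA p.1 p.2).card ≤ (n - 1) ^ 2 / 2) := by
  classical
  set U : Finset (ℕ × ℕ) := D.biUnion fun p => SingA p.1 p.2 with hUdef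
  set I : Finset ℕ := D.image Prod.fst with hIdef
  set J : Finset ℕ := D.image Prod.snd with hJdef
  set P : Finset (ℕ × ℕ) :=
    (range n).biUnion (fun b => (range b).image (fun a => (a + 1, b + 1))) with hPdef
  -- membership in P
  have hmemP : ∀ x : ℕ × ℕ, x ∈ P ↔ 1 ≤ x.1 ∧ x.1 < x.2 ∧ x.2 ≤ n := by
    rintro ⟨x, y⟩
    simp only [hPdef, mem_biUnion, mem_image, mem_range, Prod.mk.injEq]
    constructor
    · rintro ⟨b, hb, a, ha, rfl, rfl⟩; omega
    · rintro ⟨h1, h2, h3⟩; exact ⟨y - 1, by omega, x - 1, by omega, by omega, by omega⟩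
  -- cardinality of P
  have hPcard : P.card = n * (n - 1) / 2 := by
    rw [hPdef, card_biUnion]
    · rw [Finset.sum_congr rfl (fun b _ => ?_), Finset.sum_range_id n]
      rw [card_image_of_injective _ (fun u v h => by simpa using (Prod.ext_iff.1 h).1)]
      exact card_range b
    · intro x hx y hy hxy
      simp only [disjoint_left, mem_image, mem_range]
      rintro p ⟨a, ha, rfl⟩ ⟨c, hc, hEq⟩
      exact hxy (show x = y by have := (Prod.ext_iff.1 hEq).2; omega)
  -- injectivity of first coordinates
  have inj1 : ∀ p ∈ D, ∀ q ∈ D, p.1 = q.1 → p = q := by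
    intro p hp q hq h
    obtain ⟨h1p, h2p, h3p⟩ := hD p hp
    obtain ⟨h1q, h2q, h3q⟩ := hD q hq
    rcases lt_trichotomy p.2 q.2 with hlt | heq | hgt
    · exact absurd ⟨p.2, q.2, by omega, hlt, h3q, by simp only [rootA, h]; abel⟩
        (hbasic q hq p hp)
    · exact Prod.ext h heq
    · exact absurd ⟨q.2, p.2, by omega, hgt, h3p, by simp only [rootA, h]; abel⟩
        (hbasic p hp q hq)
  -- injectivity of second coordinates
  have inj2 : ∀ p ∈ D, ∀ q ∈ D, p.2 = q.2 → p = q := by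
    intro p hp q hq h
    obtain ⟨h1p, h2p, h3p⟩ := hD p hp
    obtain ⟨h1q, h2q, h3q⟩ := hD q hq
    rcases lt_trichotomy p.1 q.1 with hlt | heq | hgt
    · exact absurd ⟨p.1, q.1, h1p, hlt, by omega, by simp only [rootA, h]; abel⟩
        (hbasic p hp q hq)
    · exact Prod.ext heq h
    · exact absurd ⟨q.1, p.1, h1q, hgt, by omega, by simp only [rootA, h]; abel⟩
        (hbasic q hq p hp)
  -- U ⊆ P
  have hUP : U ⊆ P := by
    intro x hx
    obtain ⟨q, hq, hxq⟩ := mem_biUnion.1 hx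
    obtain ⟨h1q, h2q, h3q⟩ := hD q hq
    rcases mem_SingA_iff.1 hxq with ⟨h1, h2, h3⟩ | ⟨h1, h2, h3⟩ <;>
      (rw [hmemP]; omega)
  -- D ⊆ P
  have hDP : D ⊆ P := by
    intro x hx
    obtain ⟨h1, h2, h3⟩ := hD x hx
    rw [hmemP]; exact ⟨h1, h2, h3⟩
  -- U and D are disjoint
  have hUD : Disjoint U D := by
    rw [disjoint_left]
    intro x hx hxD
    obtain ⟨q, hq, hxq⟩ := mem_biUnion.1 hx
    rcases mem_SingA_iff.1 hxq with ⟨h1, h2, h3⟩ | ⟨h1, h2, h3⟩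
    · have hxe := inj1 x hxD q hq h1; rw [← hxe] at h3; omega
    · have hxe := inj2 x hxD q hq h1; rw [← hxe] at h2; omega
  -- free elements
  set Fr : Finset ℕ := (Icc 1 n) \ (I ∪ J) with hFrdef
  have hIJsub : I ∪ J ⊆ Icc 1 n := by
    intro a ha
    rcases mem_union.1 ha with h | h <;>
    · obtain ⟨q, hq, rfl⟩ := mem_image.1 h
      obtain ⟨h1, h2, h3⟩ := hD q hq
      rw [mem_Icc]; omega
  have hFrcard : Fr.card + (I ∪ J).card = n := by
    rw [hFrdef, card_sdiff_add_card_eq_card hIJsub, Nat.card_Icc]; omega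
  have hIJcard : (I ∪ J).card ≤ 2 * D.card := by
    calc (I ∪ J).card ≤ I.card + J.card := card_union_le _ _
    _ ≤ D.card + D.card := Nat.add_le_add card_image_le card_image_le
    _ = 2 * D.card := by ring
  -- the key inequality
  have key : U.card + n / 2 ≤ n * (n - 1) / 2 := by
    by_cases hFr : Fr.Nonempty
    · set a0 : ℕ := Fr.min' hFr with ha0
      set F : Finset (ℕ × ℕ) := (Fr.erase a0).image (fun b => (a0, b)) with hFdef
      have ha0F : a0 ∈ Fr := Fr.min'_mem hFr
      have hFmem : ∀ x ∈ F, ∃ b ∈ Fr, b ≠ a0 ∧ x = (a0, b) := by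
        intro x hx
        obtain ⟨b, hb, rfl⟩ := mem_image.1 hx
        exact ⟨b, (mem_erase.1 hb).2, (mem_erase.1 hb).1, rfl⟩
      have hnotIJ : ∀ a ∈ Fr, a ∉ I ∧ a ∉ J := by
        intro a ha
        have := (mem_sdiff.1 ha).2
        constructor <;> intro h <;> exact this (mem_union.2 (by tauto))
      -- F ⊆ P
      have hFP : F ⊆ P := by
        intro x hx
        obtain ⟨b, hb, hbne, rfl⟩ := hFmem x hx
        have h1 : a0 ∈ Icc 1 n := (mem_sdiff.1 ha0F).1
        have h2 : b ∈ Icc 1 n := (mem_sdiff.1 hb).1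
        have h3 : a0 ≤ b := Fr.min'_le b hb
        rw [hmemP]
        rw [mem_Icc] at h1 h2
        refine ⟨h1.1, by omega, h2.2⟩
      -- F disjoint from U
      have hUF : Disjoint U F := by
        rw [disjoint_right]
        intro x hx hxU
        obtain ⟨b, hb, hbne, rfl⟩ := hFmem x hx
        obtain ⟨q, hq, hxq⟩ := mem_biUnion.1 hxU
        rcases mem_SingA_iff.1 hxq with ⟨h1, _, _⟩ | ⟨h1, _, _⟩
        · exact (hnotIJ a0 ha0F).1 (mem_image.2 ⟨q, hq, h1.symm⟩)
        · exact (hnotIJ b hb).2 (mem_image.2 ⟨q, hq, h1.symm⟩)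
      -- F disjoint from D
      have hDF : Disjoint D F := by
        rw [disjoint_right]
        intro x hx hxD
        obtain ⟨b, hb, hbne, rfl⟩ := hFmem x hx
        exact (hnotIJ a0 ha0F).1 (mem_image.2 ⟨(a0, b), hxD, rfl⟩)
      have hFcard : F.card = Fr.card - 1 := by
        rw [hFdef, card_image_of_injective _ (fun u v h => by simpa using h),
          card_erase_of_mem ha0F]
      have hsum : U.card + D.card + F.card ≤ P.card := by
        have hd2 : Disjoint (U ∪ D) F := by
          rw [disjoint_union_left]; exact ⟨hUF, hDF⟩
        calc U.card + D.card + F.card = ((U ∪ D) ∪ F).card := by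
              rw [card_union_of_disjoint hd2, card_union_of_disjoint hUD]
        _ ≤ P.card := card_le_card (union_subset (union_subset hUP hDP) hFP)
      have hFrpos : 1 ≤ Fr.card := card_pos.2 hFr
      rw [hPcard] at hsum
      omega
    · -- Fr is empty
      have hFr0 : Fr.card = 0 := by
        rw [card_eq_zero]; exact not_nonempty_iff_eq_empty.1 hFr
      have hsum : U.card + D.card ≤ P.card := by
        calc U.card + D.card = (U ∪ D).card := (card_union_of_disjoint hUD).symm
        _ ≤ P.card := card_le_card (union_subset hUP hDP)
      rw [hPcard] at hsum
      omega
  -- conclude both parity cases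
  have hid1 : (n - 2) * n + n = n * (n - 1) ∨ n = 1 := by
    rcases Nat.lt_or_ge n 2 with h | h
    · interval_cases n <;> simp
    · left
      obtain ⟨m, rfl⟩ : ∃ m, n = m + 2 := ⟨n - 2, by omega⟩
      simp [Nat.add_sub_cancel]; ring
  have hid2 : (n - 1) ^ 2 + (n - 1) = n * (n - 1) := by
    rcases Nat.eq_zero_or_pos n with rfl | h
    · simp
    · obtain ⟨m, rfl⟩ : ∃ m, n = m + 1 := ⟨n - 1, by omega⟩
      simp [Nat.add_sub_cancel]; ring
  constructor
  · intro hev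
    rw [Nat.even_iff] at hev
    have h2n : 2 ∣ n := by omega
    have h2X : 2 ∣ (n - 2) * n := h2n.mul_left _
    have h2Y : 2 ∣ n * (n - 1) := h2n.mul_right _
    obtain ⟨X, hX⟩ := h2X
    obtain ⟨Y, hY⟩ := h2Y
    rcases hid1 with hid | hid
    · rw [hX, hY] at hid
      rw [hY] at key
      rw [hX]
      omega
    · omega
  · intro hodd
    rw [Nat.odd_iff] at hodd
    have h2n : 2 ∣ (n - 1) := by omega
    have h2X : 2 ∣ (n - 1) ^ 2 := by rw [sq]; exact h2n.mul_right _
    have h2Y : 2 ∣ n * (n - 1) := h2n.mul_left _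
    obtain ⟨X, hX⟩ := h2X
    obtain ⟨Y, hY⟩ := h2Y
    rw [hX, hY] at hid2
    rw [hY] at key
    rw [hX]
    omega
end

section
/- For every integer m with 0 ≤ m ≤ ¼(n−2)n (n even) or 0 ≤ m ≤ ¼(n−1)² (n odd), there exists a basic subset D_m of Φ⁺(A_{n-1}) with empty derived set such that s(D_m) = 2m. -/
open Finset

/-- `a 0, a 1, …, a r` is a chain in `D`: the consecutive pairs (roots) lie in `D`. -/
def IsChainSeq (D : Finset (ℕ × ℕ)) (a : ℕ → ℕ) (r : ℕ) : Prop :=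
  ∀ t < r, (a t, a (t + 1)) ∈ D

/-- `(a, b)` (index sequences `a 0, …, a r` and `b 0, …, b r`, giving chains of equal
length `r ≥ 1`) is a special pair of chains with respect to `D`: the chains intertwine
(`a 0 < b 0 < a 1 < b 1 < ⋯ < a r < b r`), and the two boundary conditions hold.
The associated derived root is `(a 0, b 0)`. -/
def SpecialPair (D : Finset (ℕ × ℕ)) (a b : ℕ → ℕ) (r : ℕ) : Prop :=
  1 ≤ r ∧ IsChainSeq D a r ∧ IsChainSeq D b r ∧
  (∀ t ≤ r, a t < b t) ∧ (∀ t < r, b t < a (t + 1)) ∧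
  (∀ j0 : ℕ, (j0, b 0) ∈ D → a 0 < j0) ∧
  (∀ i' : ℕ, (a r, i') ∈ D → i' < b r)

lemma not_pos_zero (n : ℕ) : ¬ isPosRootA n 0 := by
  rintro ⟨p, q, hp, hpq, hq, hv⟩
  have h := congrFun hv p
  simp [eps, hpq.ne] at h

lemma not_root_sub (n i1 j1 i2 j2 : ℕ)
    (h1 : i1 ≠ j1) (h2 : i1 ≠ i2) (h3 : i1 ≠ j2) (h4 : j2 ≠ j1) (h5 : j2 ≠ i2) :
    ¬ isPosRootA n (rootA (i1, j1) - rootA (i2, j2)) := by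
  rintro ⟨p, q, hp, hpq, hq, hv⟩
  have e1 := congrFun hv i1
  have e2 := congrFun hv j2
  simp [rootA, eps, h1, h2, h3, h4, h5, Ne.symm h3, Pi.sub_apply] at e1 e2
  split_ifs at e1 e2 <;> omega

lemma mem_SingA' {i j : ℕ} {z : ℕ × ℕ} (h : z ∈ SingA i j) :
    (z.1 = i ∧ i < z.2 ∧ z.2 < j) ∨ (z.2 = j ∧ i < z.1 ∧ z.1 < j) := by
  rcases Finset.mem_union.mp h with h | h
  · obtain ⟨x, hx, rfl⟩ := Finset.mem_image.mp h
    exact Or.inl ⟨rfl, (Finset.mem_Ioo.mp hx).1, (Finset.mem_Ioo.mp hx).2⟩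
  · obtain ⟨x, hx, rfl⟩ := Finset.mem_image.mp h
    exact Or.inr ⟨rfl, (Finset.mem_Ioo.mp hx).1, (Finset.mem_Ioo.mp hx).2⟩

lemma singA_card (i j : ℕ) : (SingA i j).card = 2 * (j - i - 1) := by
  rw [SingA, Finset.card_union_of_disjoint, Finset.card_image_of_injective _ (fun a b h => by simpa using h),
    Finset.card_image_of_injective _ (fun a b h => by simpa using h), Nat.card_Ioo]
  · omega
  · simp only [Finset.disjoint_left, Finset.mem_image, Finset.mem_Ioo]
    rintro z ⟨x, ⟨hx1, hx2⟩, rfl⟩ ⟨y, ⟨hy1, hy2⟩, hy⟩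
    have := (Prod.mk.injEq _ _ _ _).mp hy
    omega

lemma sum_aux (n k : ℕ) (h : 2*k+2 ≤ n) :
    ∑ t ∈ Finset.range k, (n - 2*t - 2) = k * (n - k - 1) := by
  induction k with
  | zero => simp
  | succ k ih =>
    rw [Finset.sum_range_succ, ih (by omega)]
    obtain ⟨d, rfl⟩ : ∃ d, n = 2*k+4+d := ⟨n-(2*k+4), by omega⟩
    have e1 : 2*k+4+d-k-1 = k+3+d := by omega
    have e2 : 2*k+4+d-2*k-2 = d+2 := by omega
    have e3 : 2*k+4+d-(k+1)-1 = k+2+d := by omega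
    rw [e1, e2, e3]; ring

/-- For every `m` with `0 ≤ m ≤ ¼(n−2)n` (`n` even) or `0 ≤ m ≤ ¼(n−1)²` (`n` odd), there is
a basic subset `D_m` of `Φ⁺(A_{n-1})` with empty derived set (no special pair of chains)
such that `s(D_m) = 2m`. -/
theorem stmt14 (n m : ℕ)
    (hm : (Even n ∧ 4 * m ≤ (n - 2) * n) ∨ (Odd n ∧ 4 * m ≤ (n - 1) ^ 2)) :
    ∃ D : Finset (ℕ × ℕ),
      (∀ p ∈ D, 1 ≤ p.1 ∧ p.1 < p.2 ∧ p.2 ≤ n) ∧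
      (∀ p ∈ D, ∀ q ∈ D, ¬ isPosRootA n (rootA p - rootA q)) ∧
      (∀ (a b : ℕ → ℕ) (r : ℕ), ¬ SpecialPair D a b r) ∧
      (D.biUnion fun p => SingA p.1 p.2).card = 2 * m := by
  rcases Nat.eq_zero_or_pos m with rfl | hm1
  · refine ⟨∅, by simp, by simp, ?_, by simp⟩
    rintro a b r ⟨hr, ha, -⟩
    exact absurd (ha 0 (by omega)) (by simp)
  -- m ≥ 1 : find a witness k0 with m ≤ (k0+1)*(n-k0-2) and 2*k0+3 ≤ n
  have hex : ∃ k0, 2*k0+3 ≤ n ∧ m ≤ (k0+1)*(n-k0-2) := by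
    rcases hm with ⟨⟨s, hs⟩, h4⟩ | ⟨⟨s, hs⟩, h4⟩
    · subst hs
      have hs2 : 2 ≤ s := by by_contra h; interval_cases s <;> omega
      obtain ⟨u, rfl⟩ : ∃ u, s = u + 2 := ⟨s - 2, by omega⟩
      refine ⟨u, by omega, ?_⟩
      have c1 : u+2+(u+2)-2 = 2*u+2 := by omega
      rw [c1] at h4
      have key : (2*u+2)*(u+2+(u+2)) = 4*((u+1)*(u+2)) := by ring
      rw [key] at h4
      have c3 : u+2+(u+2)-u-2 = u+2 := by omega
      rw [c3]
      exact Nat.le_of_mul_le_mul_left h4 (by norm_num)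
    · subst hs
      have hs2 : 1 ≤ s := by by_contra h; interval_cases s <;> omega
      obtain ⟨u, rfl⟩ : ∃ u, s = u + 1 := ⟨s - 1, by omega⟩
      refine ⟨u, by omega, ?_⟩
      have c1 : 2*(u+1)+1-1 = 2*(u+1) := by omega
      rw [c1] at h4
      have key : (2*(u+1))^2 = 4*((u+1)*(u+1)) := by ring
      rw [key] at h4
      have c3 : 2*(u+1)+1-u-2 = u+1 := by omega
      rw [c3]
      exact Nat.le_of_mul_le_mul_left h4 (by norm_num)
  obtain ⟨k, ⟨hk3, hk1⟩, hminp⟩ :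
      ∃ k, (2*k+3 ≤ n ∧ m ≤ (k+1)*(n-k-2)) ∧
        ∀ k' < k, ¬(2*k'+3 ≤ n ∧ m ≤ (k'+1)*(n-k'-2)) :=
    ⟨Nat.find hex, Nat.find_spec hex, fun k' h => Nat.find_min hex h⟩
  -- minimality: k*(n-k-1) < m
  have hlt : k*(n-k-1) < m := by
    rcases Nat.eq_zero_or_pos k with hk0 | hk0
    · rw [hk0]; simpa using hm1
    · have hmin := hminp (k-1) (by omega)
      by_contra h
      apply hmin
      refine ⟨by omega, ?_⟩
      have c1 : (k-1)+1 = k := by omega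
      have c2 : n-(k-1)-2 = n-k-1 := by omega
      rw [c1, c2]; omega
  -- the identity (k+1)*(n-k-2) = k*(n-k-1) + (n-(2*k+2))
  have hid : (k+1)*(n-k-2) = k*(n-k-1) + (n-(2*k+2)) := by
    obtain ⟨d, hd⟩ : ∃ d, n = 2*k+3+d := ⟨n-(2*k+3), by omega⟩
    rw [hd]
    have e1 : 2*k+3+d-k-2 = k+1+d := by omega
    have e2 : 2*k+3+d-k-1 = k+2+d := by omega
    have e3 : 2*k+3+d-(2*k+2) = d+1 := by omega
    rw [e1, e2, e3]; ring
  obtain ⟨F, hF⟩ : ∃ F, F = k*(n-k-1) := ⟨_, rfl⟩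
  rw [← hF] at hlt
  have hB : m ≤ F + (n-(2*k+2)) := by rw [hF]; omega
  obtain ⟨j, hj1, hj2, hjm⟩ : ∃ j, k+3 ≤ j ∧ j ≤ n-k ∧ F + (j-(k+1)-1) = m :=
    ⟨k+2+(m-F), by omega, by omega, by omega⟩
  refine ⟨insert (k+1, j) ((Finset.range k).image fun t => (t+1, n-t)), ?_, ?_, ?_, ?_⟩
  case _ =>
    intro p hp
    rcases Finset.mem_insert.mp hp with rfl | h
    · exact ⟨by omega, by omega, by omega⟩
    · obtain ⟨t, ht, rfl⟩ := Finset.mem_image.mp h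
      have ht' := Finset.mem_range.mp ht
      exact ⟨by omega, by omega, by omega⟩
  case _ =>
    intro p hp q hq
    rcases Finset.mem_insert.mp hp with rfl | h
    · rcases Finset.mem_insert.mp hq with rfl | h'
      · rw [sub_self]; exact not_pos_zero n
      · obtain ⟨t, ht, rfl⟩ := Finset.mem_image.mp h'
        have ht' := Finset.mem_range.mp ht
        exact not_root_sub n (k+1) j (t+1) (n-t)
          (by omega) (by omega) (by omega) (by omega) (by omega)
    · obtain ⟨t, ht, rfl⟩ := Finset.mem_image.mp h
      have ht' := Finset.mem_range.mp ht
      rcases Finset.mem_insert.mp hq with rfl | h'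
      · exact not_root_sub n (t+1) (n-t) (k+1) j
          (by omega) (by omega) (by omega) (by omega) (by omega)
      · obtain ⟨u, hu, rfl⟩ := Finset.mem_image.mp h'
        have hu' := Finset.mem_range.mp hu
        rcases eq_or_ne t u with rfl | htu
        · rw [sub_self]; exact not_pos_zero n
        · exact not_root_sub n (t+1) (n-t) (u+1) (n-u)
            (by omega) (by omega) (by omega) (by omega) (by omega)
  case _ =>
    rintro a b r ⟨hr, ha, hb, hab, hba, -, -⟩
    have h1 := ha 0 (by omega)
    have h2 := hb 0 (by omega)
    have o1 : a 0 < b 0 := hab 0 (by omega)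
    have o2 : b 0 < a 1 := hba 0 (by omega)
    have o3 : a 1 < b 1 := hab 1 hr
    simp only [zero_add] at h1 h2 o2
    rcases Finset.mem_insert.mp h1 with h1' | h1'
    · have e1 := (Prod.mk.injEq _ _ _ _).mp h1'
      rcases Finset.mem_insert.mp h2 with h2' | h2'
      · have e2 := (Prod.mk.injEq _ _ _ _).mp h2'
        omega
      · obtain ⟨u, hu, h2''⟩ := Finset.mem_image.mp h2'
        have hu' := Finset.mem_range.mp hu
        have e2 := (Prod.mk.injEq _ _ _ _).mp h2''.symm
        omega
    · obtain ⟨t, ht, h1''⟩ := Finset.mem_image.mp h1'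
      have ht' := Finset.mem_range.mp ht
      have e1 := (Prod.mk.injEq _ _ _ _).mp h1''.symm
      rcases Finset.mem_insert.mp h2 with h2' | h2'
      · have e2 := (Prod.mk.injEq _ _ _ _).mp h2'
        omega
      · obtain ⟨u, hu, h2''⟩ := Finset.mem_image.mp h2'
        have hu' := Finset.mem_range.mp hu
        have e2 := (Prod.mk.injEq _ _ _ _).mp h2''.symm
        omega
  case _ =>
    have hdisj : ∀ p ∈ insert (k+1, j) ((Finset.range k).image fun t => (t+1, n-t)),
        ∀ q ∈ insert (k+1, j) ((Finset.range k).image fun t => (t+1, n-t)),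
        p ≠ q → Disjoint (SingA p.1 p.2) (SingA q.1 q.2) := by
      intro p hp q hq hne
      rw [Finset.disjoint_left]
      intro z hz1 hz2
      have c1 := mem_SingA' hz1
      have c2 := mem_SingA' hz2
      rcases Finset.mem_insert.mp hp with rfl | h
      · rcases Finset.mem_insert.mp hq with rfl | h'
        · exact hne rfl
        · obtain ⟨u, hu, rfl⟩ := Finset.mem_image.mp h'
          have hu' := Finset.mem_range.mp hu
          simp only at c1 c2
          omega
      · obtain ⟨t, ht, rfl⟩ := Finset.mem_image.mp h
        have ht' := Finset.mem_range.mp ht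
        rcases Finset.mem_insert.mp hq with rfl | h'
        · simp only at c1 c2
          omega
        · obtain ⟨u, hu, rfl⟩ := Finset.mem_image.mp h'
          have hu' := Finset.mem_range.mp hu
          have htu : t ≠ u := by
            rintro rfl; exact hne rfl
          simp only at c1 c2
          omega
    rw [Finset.card_biUnion hdisj]
    have hnotmem : (k+1, j) ∉ (Finset.range k).image fun t => (t+1, n-t) := by
      simp only [Finset.mem_image, Finset.mem_range, not_exists]
      rintro t ⟨ht, he⟩
      have := (Prod.mk.injEq _ _ _ _).mp he
      omega
    rw [Finset.sum_insert hnotmem]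
    rw [Finset.sum_image (by
      intro x hx y hy he
      have := (Prod.mk.injEq _ _ _ _).mp he
      omega)]
    have hsum : ∑ t ∈ Finset.range k, (SingA ((t+1, n-t)).1 ((t+1, n-t)).2).card
        = ∑ t ∈ Finset.range k, 2*(n - 2*t - 2) := by
      refine Finset.sum_congr rfl fun t ht => ?_
      have ht' := Finset.mem_range.mp ht
      rw [singA_card]
      congr 1
      omega
    rw [hsum, ← Finset.mul_sum, sum_aux n k (by omega), ← hF, singA_card]
    omega
end

section
/- Let g be the strictly upper triangular n×n complex matrices, α = ε_i − ε_j with i < j, and f ∈ g* satisfying: f(E_{ij}) = 1; f(E_{rs}) = f(E_{is})·f(E_{rj}) whenever i < r < s < j; f(E_{rs}) = 0 for all other (r,s) with (r,s) ∉ S(α) = {(i,k) : i<k<j} ∪ {(k,j) : i<k<j}. Then f lies in the coadjoint orbit of e*_{ij}; explicitly, f = (∏_{k=i+1}^{j-1} exp(f(E_{ik})·ad*E_{kj}) ∏_{k=i+1}^{j-1} exp(−f(E_{kj})·ad*E_{ik}))·e*_{ij}. -/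
open Matrix Finset

/-!
Put `A = ∑_{i<k<j} f(E_{ik}) E_{kj}` (`iooCol`) and `B = ∑_{i<k<j} f(E_{kj}) E_{ik}` (`iooRow`).
The factors of each product multiply pairwise to zero, so `g = (1 + A)(1 - B)` and
`g⁻¹ = (1 + B)(1 - A)`. Hence `(g⁻¹ x g)_{ij} = ∑_{a,b} u_a x_{ab} v_b`, where `u` is row `i` of
`g⁻¹` and `v` is column `j` of `g`, both explicit; and the defining equations of the orbit say
precisely that `f(E_{ab}) = u_a v_b` for `a < b`.
-/

theorem List.prod_map_one_add_of_mul_eq_zero {ι R : Type*} [Semiring R] (l : List ι) (M : ι → R)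
    (h : ∀ k ∈ l, ∀ k' ∈ l, M k * M k' = 0) :
    (l.map fun k => 1 + M k).prod = 1 + (l.map M).sum := by
  induction l with
  | nil => simp
  | cons k t ih =>
    have hk : M k * (t.map M).sum = 0 := by
      rw [← List.sum_map_mul_left]
      refine List.sum_eq_zero fun x hx => ?_
      obtain ⟨k', hk', rfl⟩ := List.mem_map.mp hx
      exact h k List.mem_cons_self k' (List.mem_cons_of_mem _ hk')
    rw [List.map_cons, List.prod_cons, List.map_cons, List.sum_cons,
      ih fun a ha b hb => h a (List.mem_cons_of_mem _ ha) b (List.mem_cons_of_mem _ hb),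
      add_mul, one_mul, mul_add, mul_one, hk, add_zero, add_right_comm, add_assoc]

theorem Finset.sum_map_sort {ι M : Type*} [AddCommMonoid M] (s : Finset ι) (r : ι → ι → Prop)
    [DecidableRel r] [IsTrans ι r] [Std.Antisymm r] [Std.Total r] (f : ι → M) :
    ((s.sort r).map f).sum = ∑ k ∈ s, f k := by
  rw [← Multiset.sum_coe, ← Multiset.map_coe, sort_eq]
  rfl

namespace Matrix

theorem inv_one_add_mul_one_sub {n R : Type*} [Fintype n] [DecidableEq n] [CommRing R]
    {A B : Matrix n n R} (hA : A * A = 0) (hB : B * B = 0) :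
    ((1 + A) * (1 - B))⁻¹ = (1 + B) * (1 - A) := by
  refine inv_eq_right_inv ?_
  have hA' : (1 + A) * (1 - A) = 1 := by simp [mul_sub, add_mul, hA]
  have hB' : (1 - B) * (1 + B) = 1 := by simp [sub_mul, mul_add, hB]
  rw [mul_assoc, ← mul_assoc (1 - B), hB', one_mul, hA']

theorem mul_mul_apply_eq_sum {l m n o α : Type*} [Fintype m] [Fintype n]
    [NonUnitalNonAssocSemiring α] (P : Matrix l m α) (x : Matrix m n α) (Q : Matrix n o α)
    (i : l) (j : o) : (P * x * Q) i j = ∑ a, ∑ b, P i a * x a b * Q b j := by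
  simp only [mul_apply, sum_mul]
  exact sum_comm

theorem _root_.LinearMap.apply_eq_sum_mul_single {m n R M : Type*} [Fintype m] [Fintype n]
    [DecidableEq m] [DecidableEq n] [CommSemiring R] [AddCommMonoid M] [Module R M]
    (f : Matrix m n R →ₗ[R] M) (x : Matrix m n R) :
    f x = ∑ a, ∑ b, x a b • f (single a b 1) := by
  conv_lhs => rw [matrix_eq_sum_single x]
  simp only [map_sum, ← map_smul, smul_single, smul_eq_mul, mul_one]

variable {ι R : Type*} [DecidableEq ι] [LinearOrder ι] [LocallyFiniteOrder ι] (i j : ι)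

def iooCol [Semiring R] (c : ι → R) : Matrix ι ι R := ∑ k ∈ Ioo i j, c k • single k j 1

def iooRow [Semiring R] (d : ι → R) : Matrix ι ι R := ∑ k ∈ Ioo i j, d k • single i k 1

section Semiring

variable [Semiring R]

theorem iooCol_apply (c : ι → R) (a b : ι) :
    iooCol i j c a b = if a ∈ Ioo i j ∧ b = j then c a else 0 := by
  by_cases hb : b = j
  · simp [iooCol, sum_apply, single_apply, hb]
  · simp [iooCol, sum_apply, Ne.symm hb, hb]

theorem iooRow_apply (d : ι → R) (a b : ι) :
    iooRow i j d a b = if a = i ∧ b ∈ Ioo i j then d b else 0 := by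
  by_cases ha : a = i
  · simp [iooRow, sum_apply, single_apply, ha]
  · simp [iooRow, sum_apply, Ne.symm ha, ha]

variable [Fintype ι]

theorem iooCol_mul_iooCol (c c' : ι → R) : iooCol i j c * iooCol i j c' = 0 := by
  ext a b
  simp only [mul_apply, iooCol_apply, zero_apply]
  refine sum_eq_zero fun k _ => ?_
  grind

theorem iooRow_mul_iooRow (d d' : ι → R) : iooRow i j d * iooRow i j d' = 0 := by
  ext a b
  simp only [mul_apply, iooRow_apply, zero_apply]
  refine sum_eq_zero fun k _ => ?_
  grind

theorem iooRow_mul_iooCol (d c : ι → R) :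
    iooRow i j d * iooCol i j c = (∑ k ∈ Ioo i j, d k * c k) • single i j 1 := by
  simp only [iooRow, iooCol, sum_mul_sum, smul_single, smul_eq_mul, mul_one, sum_smul]
  refine sum_congr rfl fun k hk => ?_
  rw [sum_eq_single_of_mem k hk fun k' _ hk' => single_mul_single_of_ne _ _ _ _ hk'.symm _,
    single_mul_single_same]

theorem prod_sort_one_add_smul_single_right (c : ι → R) :
    (((Ioo i j).sort (· ≤ ·)).map fun k => 1 + c k • single k j (1 : R)).prod =
      1 + iooCol i j c := by
  rw [List.prod_map_one_add_of_mul_eq_zero, sum_map_sort, iooCol]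
  intro k _ k' hk'
  rw [smul_single, smul_single]
  exact single_mul_single_of_ne _ _ _ _ (mem_Ioo.mp ((mem_sort _).mp hk')).2.ne' _

end Semiring

section Ring

variable [Fintype ι] [Ring R]

theorem prod_sort_one_sub_smul_single_left (d : ι → R) :
    (((Ioo i j).sort (· ≤ ·)).map fun k => 1 - d k • single i k (1 : R)).prod =
      1 - iooRow i j d := by
  simp_rw [sub_eq_add_neg, ← neg_smul]
  rw [List.prod_map_one_add_of_mul_eq_zero, sum_map_sort, iooRow, ← sum_neg_distrib]
  · simp_rw [neg_smul]
  intro k hk k' _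
  rw [smul_single, smul_single]
  exact single_mul_single_of_ne _ _ _ _ (mem_Ioo.mp ((mem_sort _).mp hk)).1.ne' _

theorem one_add_iooCol_mul_one_sub_iooRow_apply (c d : ι → R) (b : ι) :
    ((1 + iooCol i j c) * (1 - iooRow i j d)) b j =
      if b = j then 1 else if b ∈ Ioo i j then c b else 0 := by
  have hcol : ∀ M : Matrix ι ι R, (M * iooRow i j d) b j = 0 := fun M => by
    simp [mul_apply, iooRow_apply]
  rw [mul_sub, mul_one, sub_apply, hcol, sub_zero, add_apply, one_apply, iooCol_apply]
  grind

theorem one_add_iooRow_mul_one_sub_iooCol_apply (c d : ι → R) (a : ι) :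
    ((1 + iooRow i j d) * (1 - iooCol i j c)) i a =
      if a = i then 1 else if a ∈ Ioo i j then d a
        else if a = j then -∑ k ∈ Ioo i j, d k * c k else 0 := by
  rw [mul_sub, mul_one, add_mul, one_mul, iooRow_mul_iooCol]
  simp only [sub_apply, add_apply, smul_apply, one_apply, iooRow_apply, iooCol_apply, single_apply,
    smul_eq_mul, true_and]
  rcases eq_or_ne a i with rfl | hai
  · rcases eq_or_ne a j with rfl | hij
    · simp
    · simp [hij.symm]
  · by_cases ha : a ∈ Ioo i j
    · simp [hai, hai.symm, ha, (mem_Ioo.mp ha).2.ne']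
    · rcases eq_or_ne a j with rfl | haj
      · simp [hai, hai.symm, ha]
      · simp [hai, hai.symm, ha, haj.symm, haj]

end Ring

/-- The value `t` in row `a = j` is irrelevant: there `b > j`, so the second factor vanishes. -/
theorem apply_single_eq_mul [CommRing R] (f : Matrix ι ι R →ₗ[R] R)
    (h1 : f (single i j (1 : R)) = 1)
    (h2 : ∀ r s : ι, i < r → r < s → s < j →
      f (single r s (1 : R)) = f (single i s (1 : R)) * f (single r j (1 : R)))
    (h3 : ∀ r s : ι, r < s → (r, s) ≠ (i, j) →
      ¬ (r = i ∧ i < s ∧ s < j) → ¬ (s = j ∧ i < r ∧ r < j) →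
      ¬ (i < r ∧ r < s ∧ s < j) → f (single r s (1 : R)) = 0)
    (t : R) {a b : ι} (hab : a < b) :
    f (single a b 1) =
      (if a = i then 1 else if a ∈ Ioo i j then f (single a j 1) else if a = j then t else 0) *
        (if b = j then 1 else if b ∈ Ioo i j then f (single i b 1) else 0) := by
  simp only [mem_Ioo]
  split_ifs <;> grind

end Matrix

theorem stmt15_general (n : ℕ) (i j : Fin n)
    (f : Matrix (Fin n) (Fin n) ℂ →ₗ[ℂ] ℂ)
    (h1 : f (single i j (1 : ℂ)) = 1)
    (h2 : ∀ r s : Fin n, i < r → r < s → s < j →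
      f (single r s (1 : ℂ)) =
        f (single i s (1 : ℂ)) * f (single r j (1 : ℂ)))
    (h3 : ∀ r s : Fin n, r < s → (r, s) ≠ (i, j) →
      ¬ (r = i ∧ i < s ∧ s < j) → ¬ (s = j ∧ i < r ∧ r < j) →
      ¬ (i < r ∧ r < s ∧ s < j) → f (single r s (1 : ℂ)) = 0) :
    ∀ x : Matrix (Fin n) (Fin n) ℂ, (∀ a b : Fin n, b ≤ a → x a b = 0) →
      f x =
        (let g : Matrix (Fin n) (Fin n) ℂ :=
          ((((Ioo i j).sort (· ≤ ·)).map fun k =>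
              (1 + f (single i k (1 : ℂ)) • single k j (1 : ℂ))).prod) *
          ((((Ioo i j).sort (· ≤ ·)).map fun k =>
              (1 - f (single k j (1 : ℂ)) • single i k (1 : ℂ))).prod)
        (g⁻¹ * x * g) i j) := by
  intro x hx
  dsimp only
  rw [prod_sort_one_add_smul_single_right, prod_sort_one_sub_smul_single_left,
    inv_one_add_mul_one_sub (iooCol_mul_iooCol _ _ _ _) (iooRow_mul_iooRow _ _ _ _),
    f.apply_eq_sum_mul_single, mul_mul_apply_eq_sum]
  refine sum_congr rfl fun a _ => sum_congr rfl fun b _ => ?_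
  rcases lt_or_ge a b with hab | hba
  · rw [apply_single_eq_mul i j f h1 h2 h3 _ hab, one_add_iooRow_mul_one_sub_iooCol_apply,
      one_add_iooCol_mul_one_sub_iooRow_apply, smul_eq_mul]
    ring
  · simp [hx a b hba]

/-- Let `g` be the strictly upper triangular `n × n` complex matrices, `α = ε_i − ε_j`
(`i < j`), and `f ∈ g*` satisfying the defining equations of the elementary orbit:
`f(E_{ij}) = 1`; `f(E_{rs}) = f(E_{is})·f(E_{rj})` for `i < r < s < j`; and `f(E_{rs}) = 0`
for all other `(r,s) ∉ S(α) = {(i,k) : i<k<j} ∪ {(k,j) : i<k<j}`.  Then `f` lies in the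
coadjoint orbit of `e*_{ij}`: explicitly, with
`g = ∏_{i<k<j} exp(f(E_{ik}) E_{kj}) · ∏_{i<k<j} exp(−f(E_{kj}) E_{ik})`
(each exponential being `1 + t•E` since `E² = 0`), we have `f(x) = e*_{ij}(g⁻¹ x g)` for all
strictly upper triangular `x`. -/
theorem stmt15 (n : ℕ) (i j : Fin n) (hij : i < j)
    (f : Matrix (Fin n) (Fin n) ℂ →ₗ[ℂ] ℂ)
    (h1 : f (single i j (1 : ℂ)) = 1)
    (h2 : ∀ r s : Fin n, i < r → r < s → s < j →
      f (single r s (1 : ℂ)) =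
        f (single i s (1 : ℂ)) * f (single r j (1 : ℂ)))
    (h3 : ∀ r s : Fin n, r < s → (r, s) ≠ (i, j) →
      ¬ (r = i ∧ i < s ∧ s < j) → ¬ (s = j ∧ i < r ∧ r < j) →
      ¬ (i < r ∧ r < s ∧ s < j) → f (single r s (1 : ℂ)) = 0) :
    ∀ x : Matrix (Fin n) (Fin n) ℂ, (∀ a b : Fin n, b ≤ a → x a b = 0) →
      f x =
        (let g : Matrix (Fin n) (Fin n) ℂ :=
          ((((Ioo i j).sort (· ≤ ·)).map fun k =>
              (1 + f (single i k (1 : ℂ)) • single k j (1 : ℂ))).prod) *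
          ((((Ioo i j).sort (· ≤ ·)).map fun k =>
              (1 - f (single k j (1 : ℂ)) • single i k (1 : ℂ))).prod)
        (g⁻¹ * x * g) i j) :=
  stmt15_general n i j f h1 h2 h3
end
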